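/- arXiv:1009.0146 — 2 statements merged into one kernel-verified Lean document; each statement's English description precedes it below -/
import Mathlib

section
/- Let k ≥ 4 with all p_i > 1, and let (k_j) be the index sequence defined by k_1 = 1 and k_j = min{ l > k_{j−1} : u^k_l = u^{k−1}_j }. Then for every j ≥ 1 and every n with k_j ≤ n < k_{j+1}, the generalized Frame-Stewart numbers satisfy G_k(n) = p_k·G_k(n−j) + q_k·G_{k−1}(j). -/
/-!
Write `e_m` for the nondecreasing enumeration of the products `∏_{i=3}^m p_i^{α_i}` and
`S_m(n) = e_m(1) + ⋯ + e_m(n)`. Splitting off the exponent of `p_m` (zero or not) shows that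
`e_m` is the merge of `e_{m-1}` and `p_m e_m`. For any merge `c` of two nondecreasing sequences
`a` and `b`, the sum of the first `n` terms of `c` is the least value of `S_a(t) + S_b(n - t)`,
attained when `t` is the number of terms of `a` among the first `n` terms of `c`. Induction on
`m` then gives `G_m(n) = q_3 ⋯ q_m S_m(n)`. Finally `k_j` is the position of `e_{k-1}(j)` in the
merge (ties go to `e_{k-1}`), so for `k_j ≤ n < k_{j+1}` the first `n` terms of `e_k` consist of
`j` terms of `e_{k-1}` and `n - j` terms of `p_k e_k`.
-/

/-- `u` (on indices ≥ 1) is a nondecreasing enumeration, with multiplicity,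
of all products ∏_{i=3}^{k} p_i^{α_i} with α_i ≥ 0. -/
def IsSmoothEnum (p : ℕ → ℕ) (k : ℕ) (u : ℕ → ℕ) : Prop :=
  (∀ j, 1 ≤ j → u j ≤ u (j + 1)) ∧
  ∃ e : {j : ℕ // 1 ≤ j} ≃ (Finset.Icc 3 k → ℕ),
    ∀ j : {j : ℕ // 1 ≤ j}, u j.1 = ∏ i : (Finset.Icc 3 k : Finset ℕ), p i.1 ^ e j i

open Finset

/-- The `t`-th term (counting from `t = 1`) of the nondecreasing sequence whose counting function
is `N`. -/
noncomputable def enumOfCount (N : ℕ → ℕ) (t : ℕ) : ℕ := sInf {v | t ≤ N v}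

theorem gc_enumOfCount {N : ℕ → ℕ} (hN : Monotone N) (hN' : ∀ t, ∃ v, t ≤ N v) :
    GaloisConnection (enumOfCount N) N := fun t _ =>
  ⟨fun h => le_trans (Nat.sInf_mem (s := {v | t ≤ N v}) (hN' t)) (hN h), fun h => Nat.sInf_le h⟩

/-- `c` is the merge of the nondecreasing sequences `a` and `b`: each of `a`, `b`, `c` is the lower
adjoint of a counting function (`a t ≤ v ↔ t ≤ A v`), and the counting function of `c` is the sum
of those of `a` and `b`. -/
structure IsMerge (A B a b c : ℕ → ℕ) : Prop where
  gc_left : GaloisConnection a A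
  gc_right : GaloisConnection b B
  gc_merge : GaloisConnection c (A + B)

/-- The number of terms of `a` among the first `n` terms of the merge of `a` and `b`, ties being
resolved in favour of `a`. -/
def mergeLeft (a b : ℕ → ℕ) : ℕ → ℕ
  | 0 => 0
  | n + 1 =>
    if a (mergeLeft a b n + 1) ≤ b (n - mergeLeft a b n + 1) then mergeLeft a b n + 1
    else mergeLeft a b n

section mergeLeft

variable {a b : ℕ → ℕ}

@[simp]
theorem mergeLeft_zero : mergeLeft a b 0 = 0 := rfl

theorem mergeLeft_le (n : ℕ) : mergeLeft a b n ≤ n := by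
  induction n with
  | zero => rfl
  | succ n ih => rw [mergeLeft]; split_ifs <;> omega

theorem mergeLeft_succ_of_le {n : ℕ} (h : a (mergeLeft a b n + 1) ≤ b (n - mergeLeft a b n + 1)) :
    mergeLeft a b (n + 1) = mergeLeft a b n + 1 := by
  rw [mergeLeft, if_pos h]

theorem mergeLeft_succ_of_lt {n : ℕ} (h : b (n - mergeLeft a b n + 1) < a (mergeLeft a b n + 1)) :
    mergeLeft a b (n + 1) = mergeLeft a b n := by
  rw [mergeLeft, if_neg h.not_ge]

theorem mergeLeft_le_succ (n : ℕ) : mergeLeft a b n ≤ mergeLeft a b (n + 1) := by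
  rw [mergeLeft]; split_ifs <;> omega

theorem mergeLeft_succ_le (n : ℕ) : mergeLeft a b (n + 1) ≤ mergeLeft a b n + 1 := by
  rw [mergeLeft]; split_ifs <;> omega

theorem mergeLeft_mono : Monotone (mergeLeft a b) :=
  monotone_nat_of_le_succ mergeLeft_le_succ

theorem mergeLeft_one (hab : a 1 ≤ b 1) : mergeLeft a b 1 = 1 :=
  mergeLeft_succ_of_le (n := 0) (by simpa [mergeLeft] using hab)

theorem exists_eq_succ_of_isLeast_mergeLeft {j P : ℕ} (hj : 1 ≤ j)
    (hP : IsLeast {n | j ≤ mergeLeft a b n} P) :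
    ∃ P', P = P' + 1 ∧ mergeLeft a b P' + 1 = j ∧ mergeLeft a b P = j := by
  have hjP : j ≤ mergeLeft a b P := hP.1
  obtain ⟨P', rfl⟩ : ∃ P', P = P' + 1 :=
    Nat.exists_eq_add_one.2 (Nat.pos_of_ne_zero fun h0 => by simp [h0] at hjP; omega)
  have hlt : mergeLeft a b P' < j := by
    by_contra! hle
    have := hP.2 hle
    omega
  have := mergeLeft_succ_le (a := a) (b := b) P'
  exact ⟨P', rfl, by omega, by omega⟩

end mergeLeft

namespace IsMerge

variable {A B a b c : ℕ → ℕ} (h : IsMerge A B a b c)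
include h

theorem apply_zero_left : a 0 = 0 := h.gc_left.l_bot

theorem apply_zero_right : b 0 = 0 := h.gc_right.l_bot

theorem apply_le_max {t s n : ℕ} (hn : t + s = n) : c n ≤ max (a t) (b s) :=
  h.gc_merge.l_le <| hn ▸ add_le_add ((h.gc_left _ _).1 (le_max_left _ _))
    ((h.gc_right _ _).1 (le_max_right _ _))

theorem min_le_apply_succ {t s n : ℕ} (hn : t + s = n) :
    min (a (t + 1)) (b (s + 1)) ≤ c (n + 1) := by
  by_contra! hlt
  have hA : ¬ t + 1 ≤ A (c (n + 1)) := fun ht =>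
    (lt_min_iff.1 hlt).1.not_ge ((h.gc_left _ _).2 ht)
  have hB : ¬ s + 1 ≤ B (c (n + 1)) := fun hs =>
    (lt_min_iff.1 hlt).2.not_ge ((h.gc_right _ _).2 hs)
  have hAB : n + 1 ≤ A (c (n + 1)) + B (c (n + 1)) := h.gc_merge.le_u_l (n + 1)
  omega

theorem sum_le {t s n : ℕ} (hn : t + s = n) :
    ∑ i ∈ Icc 1 n, c i ≤ ∑ i ∈ Icc 1 t, a i + ∑ i ∈ Icc 1 s, b i := by
  induction n generalizing t s with
  | zero =>
    obtain ⟨rfl, rfl⟩ : t = 0 ∧ s = 0 := by omega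
    simp
  | succ n ih =>
    have hmax := h.apply_le_max hn
    obtain ⟨t, rfl, hc⟩ | ⟨s, rfl, hc⟩ :
        (∃ t', t = t' + 1 ∧ c (n + 1) ≤ a (t' + 1)) ∨
          ∃ s', s = s' + 1 ∧ c (n + 1) ≤ b (s' + 1) := by
      rcases t with _ | t <;> rcases s with _ | s
      · omega
      · rw [h.apply_zero_left, max_eq_right (Nat.zero_le _)] at hmax
        exact Or.inr ⟨s, rfl, hmax⟩
      · rw [h.apply_zero_right, max_eq_left (Nat.zero_le _)] at hmax
        exact Or.inl ⟨t, rfl, hmax⟩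
      · rcases le_max_iff.1 hmax with hc | hc
        exacts [Or.inl ⟨t, rfl, hc⟩, Or.inr ⟨s, rfl, hc⟩]
    · have := ih (t := t) (s := s) (by omega)
      rw [sum_Icc_succ_top (by omega), sum_Icc_succ_top (by omega)]
      omega
    · have := ih (t := t) (s := s) (by omega)
      rw [sum_Icc_succ_top (by omega), sum_Icc_succ_top (by omega)]
      omega

theorem mergeLeft_invariant (n : ℕ) :
    a (mergeLeft a b n) ≤ b (n - mergeLeft a b n + 1) ∧
      b (n - mergeLeft a b n) ≤ a (mergeLeft a b n + 1) := by
  induction n with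
  | zero => simp [mergeLeft, h.apply_zero_left, h.apply_zero_right]
  | succ n ih =>
    have hle := mergeLeft_le (a := a) (b := b) n
    by_cases hc : a (mergeLeft a b n + 1) ≤ b (n - mergeLeft a b n + 1)
    · rw [mergeLeft_succ_of_le hc,
        show n + 1 - (mergeLeft a b n + 1) = n - mergeLeft a b n by omega]
      exact ⟨hc, ih.2.trans (h.gc_left.monotone_l (by omega))⟩
    · rw [not_le] at hc
      rw [mergeLeft_succ_of_lt hc, show n + 1 - mergeLeft a b n = n - mergeLeft a b n + 1 by omega]
      exact ⟨ih.1.trans (h.gc_right.monotone_l (by omega)), hc.le⟩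

theorem apply_succ (n : ℕ) :
    c (n + 1) = min (a (mergeLeft a b n + 1)) (b (n - mergeLeft a b n + 1)) := by
  have hle := mergeLeft_le (a := a) (b := b) n
  obtain ⟨inv₁, inv₂⟩ := h.mergeLeft_invariant n
  refine le_antisymm (le_min ?_ ?_) (h.min_le_apply_succ (by omega))
  · exact (h.apply_le_max (t := mergeLeft a b n + 1) (by omega)).trans (max_le le_rfl inv₂)
  · exact (h.apply_le_max (s := n - mergeLeft a b n + 1) (by omega)).trans (max_le inv₁ le_rfl)

theorem sum_eq (n : ℕ) :
    ∑ i ∈ Icc 1 n, c i =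
      ∑ i ∈ Icc 1 (mergeLeft a b n), a i + ∑ i ∈ Icc 1 (n - mergeLeft a b n), b i := by
  induction n with
  | zero => simp [mergeLeft]
  | succ n ih =>
    have hle := mergeLeft_le (a := a) (b := b) n
    rw [sum_Icc_succ_top (by omega), ih, h.apply_succ]
    by_cases hc : a (mergeLeft a b n + 1) ≤ b (n - mergeLeft a b n + 1)
    · rw [mergeLeft_succ_of_le hc,
        show n + 1 - (mergeLeft a b n + 1) = n - mergeLeft a b n by omega, min_eq_left hc,
        sum_Icc_succ_top (by omega)]
      ring
    · rw [not_le] at hc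
      rw [mergeLeft_succ_of_lt hc, show n + 1 - mergeLeft a b n = n - mergeLeft a b n + 1 by omega,
        min_eq_right hc.le, sum_Icc_succ_top (Nat.le_add_left 1 _)]
      ring

theorem apply_succ_eq_iff (n : ℕ) :
    c (n + 1) = a (mergeLeft a b n + 1) ↔ mergeLeft a b (n + 1) = mergeLeft a b n + 1 := by
  rw [h.apply_succ]
  by_cases hc : a (mergeLeft a b n + 1) ≤ b (n - mergeLeft a b n + 1)
  · simp [mergeLeft_succ_of_le hc, min_eq_left hc]
  · rw [not_le] at hc
    simp [mergeLeft_succ_of_lt hc, min_eq_right hc.le, hc.ne]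

theorem exists_le_mergeLeft (j : ℕ) : ∃ n, j ≤ mergeLeft a b n := by
  -- otherwise all but `j` of the first `n` terms come from `b`, and they stay below `a j`
  by_contra! hlt
  set n := j + B (a j) + 1
  have hb : b (n - mergeLeft a b n) ≤ a j :=
    (h.mergeLeft_invariant n).2.trans (h.gc_left.monotone_l (hlt n))
  have := (h.gc_right _ _).1 hb
  have := hlt n
  omega

theorem isLeast_setOf_le_mergeLeft (hab : a 1 ≤ b 1) {K : ℕ → ℕ} (hK1 : K 1 = 1)
    (hK : ∀ j, 2 ≤ j → K j = sInf {l | K (j - 1) < l ∧ c l = a j}) {j : ℕ} (hj : 1 ≤ j) :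
    IsLeast {n | j ≤ mergeLeft a b n} (K j) := by
  induction j, hj using Nat.le_induction with
  | base =>
    rw [hK1]
    refine ⟨(mergeLeft_one hab).ge, fun n hn => Nat.one_le_iff_ne_zero.2 ?_⟩
    rintro rfl
    simp [mergeLeft] at hn
  | succ j hj ih =>
    obtain ⟨_, -, -, hKj⟩ := exists_eq_succ_of_isLeast_mergeLeft hj ih
    have hmin : IsLeast {n | j + 1 ≤ mergeLeft a b n} (sInf {n | j + 1 ≤ mergeLeft a b n}) :=
      isLeast_csInf (h.exists_le_mergeLeft (j + 1))
    generalize sInf {n | j + 1 ≤ mergeLeft a b n} = P at hmin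
    obtain ⟨P, rfl, hTP, hTP1⟩ := exists_eq_succ_of_isLeast_mergeLeft (Nat.le_add_left 1 j) hmin
    -- `P + 1`, where `a (j + 1)` enters the merge, is the first position after `K j` holding it
    suffices IsLeast {l | K j < l ∧ c l = a (j + 1)} (P + 1) by
      rwa [hK (j + 1) (by omega), Nat.add_sub_cancel, this.csInf_eq]
    refine ⟨⟨?_, ?_⟩, ?_⟩
    · by_contra! hPK
      have := mergeLeft_mono (a := a) (b := b) hPK
      omega
    · rw [← hTP]
      exact (h.apply_succ_eq_iff P).2 (by omega)
    · rintro l ⟨hKl, hcl⟩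
      by_contra! hlP
      obtain ⟨l, rfl⟩ : ∃ l', l = l' + 1 := Nat.exists_eq_add_one.2 (by omega)
      have hTl : ¬ j + 1 ≤ mergeLeft a b (l + 1) := fun hle => (hmin.2 hle).not_gt hlP
      have := mergeLeft_mono (a := a) (b := b) (Nat.le_of_lt_succ hKl)
      have := mergeLeft_le_succ (a := a) (b := b) l
      rw [show j + 1 = mergeLeft a b l + 1 by omega, h.apply_succ_eq_iff] at hcl
      omega

theorem mergeLeft_eq_of_le_of_lt (hab : a 1 ≤ b 1) {K : ℕ → ℕ} (hK1 : K 1 = 1)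
    (hK : ∀ j, 2 ≤ j → K j = sInf {l | K (j - 1) < l ∧ c l = a j}) {j n : ℕ} (hj : 1 ≤ j)
    (h₁ : K j ≤ n) (h₂ : n < K (j + 1)) : mergeLeft a b n = j := by
  have hlow : j ≤ mergeLeft a b (K j) := (h.isLeast_setOf_le_mergeLeft hab hK1 hK hj).1
  have hup := (h.isLeast_setOf_le_mergeLeft hab hK1 hK (Nat.le_add_left 1 j)).2
  have := mergeLeft_mono (a := a) (b := b) h₁
  have : ¬ j + 1 ≤ mergeLeft a b n := fun hn => (hup hn).not_gt h₂
  omega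

end IsMerge

def powMulLeEquiv {X : Type*} (g : X → ℕ) {c : ℕ} (hc : 0 < c) (v : ℕ) :
    {x : ℕ × X // c ^ x.1 * g x.2 ≤ v} ≃
      {y // g y ≤ v} ⊕ {x : ℕ × X // c ^ x.1 * g x.2 ≤ v / c} where
  toFun
    | ⟨(0, y), h⟩ => .inl ⟨y, by simpa using h⟩
    | ⟨(n + 1, y), h⟩ =>
      .inr ⟨(n, y), (Nat.le_div_iff_mul_le hc).2 (by rwa [mul_right_comm, ← pow_succ])⟩
  invFun
    | .inl ⟨y, h⟩ => ⟨(0, y), by simpa using h⟩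
    | .inr ⟨(n, y), h⟩ =>
      ⟨(n + 1, y), by rw [pow_succ, mul_right_comm]; exact (Nat.le_div_iff_mul_le hc).1 h⟩
  left_inv := by rintro ⟨⟨_ | n, y⟩, h⟩ <;> rfl
  right_inv := by rintro (⟨y, h⟩ | ⟨⟨n, y⟩, h⟩) <;> rfl

section smoothCount

variable {ι : Type*} (p : ι → ℕ)

noncomputable def smoothCount (s : Finset ι) (v : ℕ) : ℕ :=
  Nat.card {α : s → ℕ // ∏ i : s, p i ^ α i ≤ v}

/-- `smoothEnum p (Icc 3 k)` is the sequence `u^k` of the paper. -/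
noncomputable def smoothEnum (s : Finset ι) : ℕ → ℕ := enumOfCount (smoothCount p s)

variable {p} {s : Finset ι}

theorem finite_prod_pow_le (hp : ∀ i ∈ s, 1 < p i) (v : ℕ) :
    Finite {α : s → ℕ // ∏ i : s, p i ^ α i ≤ v} := by
  refine Finite.of_injective (β := s → Fin (v + 1)) (fun α i => ⟨α.1 i, Nat.lt_succ_of_le ?_⟩)
    fun α β hαβ => Subtype.ext (funext fun i => congrArg Fin.val (congrFun hαβ i))
  calc α.1 i ≤ p i ^ α.1 i := (Nat.lt_pow_self (hp i i.2)).le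
    _ ≤ ∏ j : s, p j ^ α.1 j :=
      single_le_prod' (f := fun j : s => p j ^ α.1 j)
        (fun j _ => Nat.one_le_pow _ _ (Nat.zero_lt_of_lt (hp j j.2))) (mem_univ i)
    _ ≤ v := α.2

theorem smoothCount_mono (hp : ∀ i ∈ s, 1 < p i) : Monotone (smoothCount p s) := fun _ w hvw =>
  have := finite_prod_pow_le hp w
  Nat.card_le_card_of_injective _ (Subtype.impEmbedding _ _ fun _ hα => hα.trans hvw).injective

theorem exists_le_smoothCount (hp : ∀ i ∈ s, 1 < p i) (hs : s.Nonempty) (t : ℕ) :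
    ∃ v, t ≤ smoothCount p s v := by
  set P := ∏ i ∈ s, p i
  have := finite_prod_pow_le hp (P ^ t)
  have hconst (n : Fin t) : ∏ i : s, p i ^ n.1 ≤ P ^ t := by
    rw [prod_pow, prod_coe_sort s p]
    exact Nat.pow_le_pow_right (prod_pos fun i hi => Nat.zero_lt_of_lt (hp i hi)) n.2.le
  obtain ⟨i, hi⟩ := hs
  refine ⟨P ^ t, ?_⟩
  calc t = Nat.card (Fin t) := (Nat.card_eq_fintype_card.trans (Fintype.card_fin t)).symm
    _ ≤ smoothCount p s (P ^ t) := Nat.card_le_card_of_injective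
      (fun n : Fin t => (⟨fun _ => n, hconst n⟩ : {α : s → ℕ // ∏ i : s, p i ^ α i ≤ P ^ t}))
      fun n n' hnn' => Fin.ext (congrFun (congrArg Subtype.val hnn') ⟨i, hi⟩)

theorem gc_smoothEnum (hp : ∀ i ∈ s, 1 < p i) (hs : s.Nonempty) :
    GaloisConnection (smoothEnum p s) (smoothCount p s) :=
  gc_enumOfCount (smoothCount_mono hp) (exists_le_smoothCount hp hs)

theorem smoothCount_zero (hp : ∀ i ∈ s, 1 < p i) : smoothCount p s 0 = 0 := by
  refine Nat.card_eq_zero.2 (Or.inl ⟨fun α => ?_⟩)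
  have := α.2
  have : 0 < ∏ i : s, p i ^ α.1 i := prod_pos fun i _ => pow_pos (Nat.zero_lt_of_lt (hp i i.2)) _
  omega

theorem one_le_smoothCount_iff (hp : ∀ i ∈ s, 1 < p i) {v : ℕ} :
    1 ≤ smoothCount p s v ↔ 1 ≤ v := by
  refine ⟨fun h => Nat.one_le_iff_ne_zero.2 ?_, fun hv => ?_⟩
  · rintro rfl; rw [smoothCount_zero hp] at h; omega
  · have := finite_prod_pow_le hp v
    have : Nonempty {α : s → ℕ // ∏ i : s, p i ^ α i ≤ v} := ⟨⟨0, by simpa using hv⟩⟩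
    exact Nat.card_pos

theorem smoothEnum_one (hp : ∀ i ∈ s, 1 < p i) (hs : s.Nonempty) : smoothEnum p s 1 = 1 :=
  eq_of_forall_ge_iff fun v => (gc_smoothEnum hp hs 1 v).trans (one_le_smoothCount_iff hp)

theorem prod_subtype_insert_pow [DecidableEq ι] {i : ι} (hi : i ∉ s) (α : ↥(insert i s) → ℕ) :
    ∏ j : ↥(insert i s), p j ^ α j =
      p i ^ α ⟨i, mem_insert_self i s⟩ * ∏ j : s, p j ^ α ⟨j, mem_insert_of_mem j.2⟩ := by
  set e := subtypeInsertEquivOption hi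
  rw [Fintype.prod_equiv e _ (fun o => p (e.symm o) ^ α (e.symm o)) (fun j => by simp),
    Fintype.prod_option]
  rfl

theorem smoothCount_insert [DecidableEq ι] {i : ι} (hi : i ∉ s) (hp : ∀ j ∈ insert i s, 1 < p j)
    (v : ℕ) :
    smoothCount p (insert i s) v = smoothCount p s v + smoothCount p (insert i s) (v / p i) := by
  have hps : ∀ j ∈ s, 1 < p j := fun j hj => hp j (mem_insert_of_mem hj)
  let σ : (↥(insert i s) → ℕ) ≃ ℕ × (s → ℕ) :=
    ((subtypeInsertEquivOption hi).arrowCongr (Equiv.refl ℕ)).trans Equiv.piOptionEquivProd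
  let E (w : ℕ) : {α : ↥(insert i s) → ℕ // ∏ j : ↥(insert i s), p j ^ α j ≤ w} ≃
      {x : ℕ × (s → ℕ) // p i ^ x.1 * ∏ j : s, p j ^ x.2 j ≤ w} :=
    σ.subtypeEquiv fun α => by rw [prod_subtype_insert_pow hi]; rfl
  have := finite_prod_pow_le hps v
  have := finite_prod_pow_le hp (v / p i)
  have := Finite.of_equiv _ (E (v / p i))
  rw [smoothCount, smoothCount, smoothCount,
    Nat.card_congr ((E v).trans (powMulLeEquiv (fun β : s → ℕ => ∏ j : s, p j ^ β j)
      (Nat.zero_lt_of_lt (hp i (mem_insert_self i s))) v)),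
    Nat.card_sum, Nat.card_congr (E (v / p i))]

theorem isMerge_smoothEnum_insert [DecidableEq ι] {i : ι} (hi : i ∉ s) (hs : s.Nonempty)
    (hp : ∀ j ∈ insert i s, 1 < p j) :
    IsMerge (smoothCount p s) (fun v => smoothCount p (insert i s) (v / p i))
      (smoothEnum p s) (fun t => p i * smoothEnum p (insert i s) t)
      (smoothEnum p (insert i s)) where
  gc_left := gc_smoothEnum (fun j hj => hp j (mem_insert_of_mem hj)) hs
  gc_right t v := by
    show p i * _ ≤ v ↔ t ≤ smoothCount p (insert i s) (v / p i)
    rw [mul_comm, ← Nat.le_div_iff_mul_le (Nat.zero_lt_of_lt (hp i (mem_insert_self i s)))]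
    exact gc_smoothEnum hp (insert_nonempty i s) t (v / p i)
  gc_merge := by
    convert gc_smoothEnum hp (insert_nonempty i s) using 1
    exact funext fun v => (smoothCount_insert hi hp v).symm

theorem smoothEnum_singleton_succ {i : ι} (hp : 1 < p i) {t : ℕ} (ht : 1 ≤ t) :
    smoothEnum p {i} (t + 1) = p i * smoothEnum p {i} t := by
  classical
  have hp' : ∀ j ∈ ({i} : Finset ι), 1 < p j := by simpa using hp
  have gc := gc_smoothEnum hp' (singleton_nonempty i)
  have hrec (v : ℕ) : smoothCount p {i} v = smoothCount p ∅ v + smoothCount p {i} (v / p i) :=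
    smoothCount_insert (notMem_empty i) hp' v
  have hempty (v : ℕ) : smoothCount p ∅ v ≤ 1 := Finite.card_le_one_iff_subsingleton.2 inferInstance
  have hpos : 1 ≤ smoothEnum p {i} t :=
    (smoothEnum_one hp' (singleton_nonempty i)).ge.trans (gc.monotone_l ht)
  refine eq_of_forall_ge_iff fun v => ?_
  rw [gc, mul_comm, ← Nat.le_div_iff_mul_le (Nat.zero_lt_of_lt hp), gc, hrec]
  constructor
  · intro h; have := hempty v; omega
  · intro h
    have : 1 ≤ v := (hpos.trans ((gc _ _).2 h)).trans (Nat.div_le_self v (p i))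
    have := (one_le_smoothCount_iff (s := ∅) (p := p) (by simp)).2 this
    omega

end smoothCount

theorem sum_Icc_succ_eq_mul_add_one {e : ℕ → ℕ} {c : ℕ} (h₁ : e 1 = 1)
    (h : ∀ t, 1 ≤ t → e (t + 1) = c * e t) (n : ℕ) :
    ∑ i ∈ Icc 1 (n + 1), e i = c * ∑ i ∈ Icc 1 n, e i + 1 := by
  induction n with
  | zero => simp [h₁]
  | succ n ih =>
    rw [sum_Icc_succ_top (by omega), h (n + 1) (by omega)]
    conv_rhs => rw [sum_Icc_succ_top (by omega)]
    rw [ih]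
    ring

theorem IsSmoothEnum.apply_le_iff {p : ℕ → ℕ} {m : ℕ} {u : ℕ → ℕ} (hu : IsSmoothEnum p m u)
    (hp : ∀ i ∈ Icc 3 m, 1 < p i) {n : ℕ} (hn : 1 ≤ n) (v : ℕ) :
    u n ≤ v ↔ n ≤ smoothCount p (Icc 3 m) v := by
  obtain ⟨hmono, e, he⟩ := hu
  have hmono' {i j : ℕ} (hi : 1 ≤ i) (hij : i ≤ j) : u i ≤ u j := by
    have : Monotone fun j => u (j + 1) := monotone_nat_of_le_succ fun j => hmono (j + 1) (by omega)
    simpa [Nat.sub_add_cancel hi, Nat.sub_add_cancel (hi.trans hij)] using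
      this (Nat.sub_le_sub_right hij 1)
  set S : Set ℕ := {j | 1 ≤ j ∧ u j ≤ v}
  let E : S ≃ {α : Icc 3 m → ℕ // ∏ i : Icc 3 m, p i ^ α i ≤ v} :=
    (Equiv.subtypeSubtypeEquivSubtypeInter (1 ≤ ·) (u · ≤ v)).symm.trans
      (e.subtypeEquiv fun j => by rw [he j])
  have := finite_prod_pow_le hp v
  have hSfin : S.Finite := Set.finite_coe_iff.1 (Finite.of_equiv _ E.symm)
  rw [smoothCount, ← Nat.card_congr E, Nat.card_coe_set_eq]
  constructor
  · intro huv
    have hsub : (Icc 1 n : Set ℕ) ⊆ S := fun j hj => by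
      rw [coe_Icc, Set.mem_Icc] at hj
      exact ⟨hj.1, (hmono' hj.1 hj.2).trans huv⟩
    simpa using Set.ncard_le_ncard hsub hSfin
  · intro hcard
    by_contra! huv
    have hsub : S ⊆ (Ico 1 n : Set ℕ) := fun j ⟨hj, hjv⟩ => by
      rw [coe_Ico, Set.mem_Ico]
      exact ⟨hj, lt_of_not_ge fun hnj => (hmono' hn hnj).not_gt (hjv.trans_lt huv)⟩
    have := Set.ncard_le_ncard hsub (Ico 1 n).finite_toSet
    simp only [Set.ncard_coe_finset, Nat.card_Ico] at this
    omega

theorem IsSmoothEnum.apply_eq_smoothEnum {p : ℕ → ℕ} {m : ℕ} {u : ℕ → ℕ} (hu : IsSmoothEnum p m u)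
    (hp : ∀ i ∈ Icc 3 m, 1 < p i) (hm : 3 ≤ m) {n : ℕ} (hn : 1 ≤ n) :
    u n = smoothEnum p (Icc 3 m) n :=
  eq_of_forall_ge_iff fun v => (hu.apply_le_iff hp hn v).trans
    (gc_smoothEnum hp (nonempty_Icc.2 hm) n v).symm

theorem isMerge_smoothEnum_Icc_succ {p : ℕ → ℕ} {m : ℕ} (hm : 3 ≤ m)
    (hp : ∀ i ∈ Icc 3 (m + 1), 1 < p i) :
    IsMerge (smoothCount p (Icc 3 m)) (fun v => smoothCount p (Icc 3 (m + 1)) (v / p (m + 1)))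
      (smoothEnum p (Icc 3 m)) (fun t => p (m + 1) * smoothEnum p (Icc 3 (m + 1)) t)
      (smoothEnum p (Icc 3 (m + 1))) := by
  have hIcc := insert_Icc_right_eq_Icc_add_one (show 3 ≤ m + 1 by omega)
  rw [← hIcc] at hp ⊢
  exact isMerge_smoothEnum_insert (by simp) (nonempty_Icc.2 hm) hp

theorem smoothEnum_Icc_one_le {p : ℕ → ℕ} {m : ℕ} (hm : 3 ≤ m)
    (hp : ∀ i ∈ Icc 3 (m + 1), 1 < p i) :
    smoothEnum p (Icc 3 m) 1 ≤ p (m + 1) * smoothEnum p (Icc 3 (m + 1)) 1 := by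
  rw [smoothEnum_one (fun i hi => hp i (Icc_subset_Icc_right (by omega) hi)) (nonempty_Icc.2 hm),
    smoothEnum_one hp (nonempty_Icc.2 (by omega)), mul_one]
  exact (hp (m + 1) (by simp; omega)).le

theorem frameStewart_eq_mul_sum {p q : ℕ → ℕ} {G : ℕ → ℕ → ℕ} (hG0 : ∀ k', G k' 0 = 0)
    (hG3 : ∀ n, 1 ≤ n → G 3 n = p 3 * G 3 (n - 1) + q 3)
    (hGk : ∀ k', 4 ≤ k' → ∀ n, 1 ≤ n →
      G k' n = sInf {v | ∃ t, 1 ≤ t ∧ t ≤ n ∧ v = p k' * G k' (n - t) + q k' * G (k' - 1) t})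
    {m : ℕ} (hm : 3 ≤ m) (hp : ∀ i ∈ Icc 3 m, 1 < p i) (n : ℕ) :
    G m n = (∏ i ∈ Icc 3 m, q i) * ∑ i ∈ Icc 1 n, smoothEnum p (Icc 3 m) i := by
  induction m, hm using Nat.le_induction generalizing n with
  | base =>
    rw [Icc_self] at hp ⊢
    rw [prod_singleton]
    induction n with
    | zero => simp [hG0]
    | succ n ih =>
      rw [hG3 (n + 1) (by omega), Nat.add_sub_cancel, ih,
        sum_Icc_succ_eq_mul_add_one (smoothEnum_one hp (singleton_nonempty 3))
          fun t ht => smoothEnum_singleton_succ (hp 3 (mem_singleton_self 3)) ht]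
      ring
  | succ m hm ih =>
    have h := isMerge_smoothEnum_Icc_succ hm hp
    have hGm := ih fun i hi => hp i (Icc_subset_Icc_right (by omega) hi)
    induction n using Nat.strong_induction_on with
    | _ n ihn =>
    rcases Nat.eq_zero_or_pos n with rfl | hn
    · simp [hG0]
    rw [hGk (m + 1) (by omega) n hn, Nat.add_sub_cancel, prod_Icc_succ_top (by omega)]
    set T := mergeLeft (smoothEnum p (Icc 3 m))
      (fun t => p (m + 1) * smoothEnum p (Icc 3 (m + 1)) t)
    have hT : 1 ≤ T n := (mergeLeft_one (smoothEnum_Icc_one_le hm hp)).ge.trans (mergeLeft_mono hn)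
    refine IsLeast.csInf_eq ⟨⟨T n, hT, mergeLeft_le n, ?_⟩, ?_⟩
    · rw [ihn _ (by omega), hGm, h.sum_eq n, prod_Icc_succ_top (by omega), ← mul_sum]
      ring
    · rintro _ ⟨t, ht, htn, rfl⟩
      rw [ihn _ (by omega), hGm, prod_Icc_succ_top (by omega)]
      calc (∏ i ∈ Icc 3 m, q i) * q (m + 1) * ∑ i ∈ Icc 1 n, smoothEnum p (Icc 3 (m + 1)) i
          ≤ (∏ i ∈ Icc 3 m, q i) * q (m + 1) * (∑ i ∈ Icc 1 t, smoothEnum p (Icc 3 m) i +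
              ∑ i ∈ Icc 1 (n - t), p (m + 1) * smoothEnum p (Icc 3 (m + 1)) i) :=
            Nat.mul_le_mul_left _ (h.sum_le (by omega))
        _ = _ := by rw [← mul_sum]; ring

theorem generalized_frame_stewart_corollary_general
    (p q : ℕ → ℕ)
    (k : ℕ) (hk : 4 ≤ k)
    (hp : ∀ i, 3 ≤ i → i ≤ k → 1 < p i)
    (G : ℕ → ℕ → ℕ)
    (hG0 : ∀ k', G k' 0 = 0)
    (hG3 : ∀ n, 1 ≤ n → G 3 n = p 3 * G 3 (n - 1) + q 3)
    (hGk : ∀ k', 4 ≤ k' → ∀ n, 1 ≤ n →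
      G k' n = sInf {v | ∃ t, 1 ≤ t ∧ t ≤ n ∧ v = p k' * G k' (n - t) + q k' * G (k' - 1) t})
    (uk uk1 : ℕ → ℕ)
    (huk : IsSmoothEnum p k uk) (huk1 : IsSmoothEnum p (k - 1) uk1)
    (K : ℕ → ℕ) (hK1 : K 1 = 1)
    (hK : ∀ j, 2 ≤ j → K j = sInf {l | K (j - 1) < l ∧ uk l = uk1 j})
    (j n : ℕ) (hj : 1 ≤ j) (h1 : K j ≤ n) (h2 : n < K (j + 1)) :
    G k n = p k * G k (n - j) + q k * G (k - 1) j := by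
  obtain ⟨m, rfl⟩ : ∃ m, k = m + 1 := ⟨k - 1, by omega⟩
  rw [Nat.add_sub_cancel] at huk1 ⊢
  have hp' : ∀ i ∈ Icc 3 (m + 1), 1 < p i := fun i hi => hp i (mem_Icc.1 hi).1 (mem_Icc.1 hi).2
  have hpm : ∀ i ∈ Icc 3 m, 1 < p i := fun i hi => hp' i (Icc_subset_Icc_right (by omega) hi)
  have h := isMerge_smoothEnum_Icc_succ (by omega) hp'
  have hK' (j : ℕ) (hj : 2 ≤ j) : K j =
      sInf {l | K (j - 1) < l ∧ smoothEnum p (Icc 3 (m + 1)) l = smoothEnum p (Icc 3 m) j} := by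
    rw [hK j hj]
    congr 1
    ext l
    exact and_congr_right fun hl => by
      rw [huk.apply_eq_smoothEnum hp' (by omega) (by omega),
        huk1.apply_eq_smoothEnum hpm (by omega) (by omega)]
  have hT := h.mergeLeft_eq_of_le_of_lt (smoothEnum_Icc_one_le (by omega) hp') hK1 hK' hj h1 h2
  rw [frameStewart_eq_mul_sum hG0 hG3 hGk (by omega) hp', frameStewart_eq_mul_sum hG0 hG3 hGk
    (by omega) hp', frameStewart_eq_mul_sum hG0 hG3 hGk (by omega) hpm, h.sum_eq n, hT,
    prod_Icc_succ_top (by omega), ← mul_sum]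
  ring

/-- Corollary: for k_j ≤ n < k_{j+1}, G_k(n) = p_k·G_k(n−j) + q_k·G_{k−1}(j). -/
theorem generalized_frame_stewart_corollary
    (p q : ℕ → ℕ) (hq : ∀ i, 1 ≤ q i)
    (k : ℕ) (hk : 4 ≤ k)
    (hp : ∀ i, 3 ≤ i → i ≤ k → 1 < p i)
    (G : ℕ → ℕ → ℕ)
    (hG0 : ∀ k', G k' 0 = 0)
    (hG3 : ∀ n, 1 ≤ n → G 3 n = p 3 * G 3 (n - 1) + q 3)
    (hGk : ∀ k', 4 ≤ k' → ∀ n, 1 ≤ n →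
      G k' n = sInf {v | ∃ t, 1 ≤ t ∧ t ≤ n ∧ v = p k' * G k' (n - t) + q k' * G (k' - 1) t})
    (uk uk1 : ℕ → ℕ)
    (huk : IsSmoothEnum p k uk) (huk1 : IsSmoothEnum p (k - 1) uk1)
    (K : ℕ → ℕ) (hK1 : K 1 = 1)
    (hK : ∀ j, 2 ≤ j → K j = sInf {l | K (j - 1) < l ∧ uk l = uk1 j})
    (j n : ℕ) (hj : 1 ≤ j) (h1 : K j ≤ n) (h2 : n < K (j + 1)) :
    G k n = p k * G k (n - j) + q k * G (k - 1) j :=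
  generalized_frame_stewart_corollary_general p q k hk hp G hG0 hG3 hGk uk uk1 huk huk1 K hK1 hK j n
    hj h1 h2
end

section
/- Let (p_i)_{3≤i≤k} with all p_i > 1 and let (u^k_j)_{j≥1} be the nondecreasing enumeration with multiplicity of {∏_{i=3}^{k} p_i^{α_i} : α_i ≥ 0}. Then the multiset {u^k_l : 1 ≤ l ≤ n} decomposes as the disjoint union of {u^{k−1}_l : 1 ≤ l ≤ j} and {p_k·u^k_l : 1 ≤ l ≤ n−j}, where j is the number of indices l ≤ n for which u^k_l arises from a tuple with α_k = 0 (equivalently, j is the largest index with k_j ≤ n). -/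
theorem Multiset.eq_of_forall_card_filter_lt {M N : Multiset ℕ}
    (h : ∀ x, (M.filter (· < x)).card = (N.filter (· < x)).card) : M = N := by
  have count_eq : ∀ (S : Multiset ℕ) v,
      S.count v = (S.filter (· < v + 1)).card - (S.filter (· < v)).card := by
    intro S v
    have hsplit : S.filter (· < v + 1) = S.filter (· < v) + S.filter (v = ·) := by
      rw [← Multiset.filter_add_not (· < v) (S.filter (· < v + 1)), Multiset.filter_filter,
        Multiset.filter_filter]
      congr 1 <;> exact Multiset.filter_congr fun x _ => by omega
    rw [hsplit, Multiset.card_add, Multiset.count_eq_card_filter_eq]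
    omega
  ext v
  rw [count_eq, count_eq, h, h]

/-- `N x` counts the indices `l ≥ 1` with `u l < x`, stated as a Galois connection; this forces
`u` to be monotone on the indices `≥ 1`. -/
def IsCountBelow (u N : ℕ → ℕ) : Prop :=
  ∀ l, 1 ≤ l → ∀ x, u l < x ↔ l ≤ N x

namespace IsCountBelow

variable {u N : ℕ → ℕ}

theorem monotone (h : IsCountBelow u N) : Monotone N := by
  intro x y hxy
  rcases Nat.eq_zero_or_pos (N x) with hx | hx
  · omega
  · exact (h _ hx y).1 (((h _ hx x).2 le_rfl).trans_le hxy)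

theorem apply_le_apply (h : IsCountBelow u N) {l l' : ℕ} (hl : 1 ≤ l) (hll' : l ≤ l') :
    u l ≤ u l' :=
  Nat.lt_succ_iff.1 ((h l hl _).2 (hll'.trans ((h l' (hl.trans hll') _).1 (Nat.lt_succ_self _))))

theorem card_filter_lt_map_Icc (h : IsCountBelow u N) (n x : ℕ) :
    (((Finset.Icc 1 n).val.map u).filter (· < x)).card = min n (N x) := by
  have hfilter : (Finset.Icc 1 n).filter (fun l => u l < x) = Finset.Icc 1 (min n (N x)) := by
    ext l
    simp only [Finset.mem_filter, Finset.mem_Icc, le_min_iff]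
    constructor
    · rintro ⟨⟨hl, hln⟩, hlx⟩
      exact ⟨hl, hln, (h l hl x).1 hlx⟩
    · rintro ⟨hl, hln, hlN⟩
      exact ⟨⟨hl, hln⟩, (h l hl x).2 hlN⟩
  have := congrArg Finset.card hfilter
  rw [Nat.card_Icc, Nat.add_sub_cancel] at this
  rw [Multiset.filter_map, Multiset.card_map, ← this]
  rfl

end IsCountBelow

section Merge

variable {a b c A B C : ℕ → ℕ}

/-- `K` matches each term of `b` with the first unused equal term of `a`, so ties between `b`
and `c` are resolved in favour of `b`. -/
theorem IsCountBelow.index_eq_add_count (hA : IsCountBelow a A) (hB : IsCountBelow b B)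
    (hC : IsCountBelow c C) (hABC : ∀ x, A x = B x + C x) {K : ℕ → ℕ} (hK1 : K 1 = 1)
    (hK : ∀ j, 2 ≤ j → K j = sInf {l | K (j - 1) < l ∧ a l = b j}) (hC1 : C (b 1) = 0) :
    ∀ m, 1 ≤ m → K m = m + C (b m) := by
  intro m hm
  induction m, hm using Nat.le_induction with
  | base => rw [hK1, hC1]
  | succ m hm ih =>
    have hBv : B (b (m + 1)) < m + 1 := by
      by_contra! H
      exact lt_irrefl _ ((hB _ (by omega) _).2 H)
    have hBv1 : m + 1 ≤ B (b (m + 1) + 1) := (hB _ (by omega) _).1 (Nat.lt_add_one _)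
    have hbm : b m ≤ b (m + 1) := hB.apply_le_apply hm (Nat.le_succ m)
    rw [hK (m + 1) (by omega), Nat.add_sub_cancel]
    refine IsLeast.csInf_eq ⟨⟨?_, ?_⟩, ?_⟩
    · have := hC.monotone hbm
      omega
    · have := hC.monotone (Nat.le_add_right (b (m + 1)) 1)
      apply le_antisymm
      · rw [← Nat.lt_add_one_iff, hA _ (by omega), hABC]
        omega
      · rw [← not_lt, hA _ (by omega), hABC]
        omega
    · rintro l ⟨hKl, hal⟩
      have hAl : A (b (m + 1)) < l := by
        rw [← not_le, ← hA l (by omega), hal]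
        exact lt_irrefl _
      rw [hABC] at hAl
      by_contra! hlt
      rcases hbm.lt_or_eq with hbv | hbv
      · have := (hB m hm _).1 hbv
        omega
      · rw [ih, hbv] at hKl
        omega

theorem IsCountBelow.map_Icc_eq_add (hA : IsCountBelow a A) (hB : IsCountBelow b B)
    (hC : IsCountBelow c C) (hABC : ∀ x, A x = B x + C x) {n j : ℕ}
    (h1 : j + C (b j) ≤ n) (h2 : n < j + 1 + C (b (j + 1))) :
    (Finset.Icc 1 n).val.map a =
      (Finset.Icc 1 j).val.map b + (Finset.Icc 1 (n - j)).val.map c := by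
  refine Multiset.eq_of_forall_card_filter_lt fun x => ?_
  rw [Multiset.filter_add, Multiset.card_add, hA.card_filter_lt_map_Icc,
    hB.card_filter_lt_map_Icc, hC.card_filter_lt_map_Icc, hABC]
  have below : B x < j → C x ≤ C (b j) := fun h =>
    hC.monotone (not_lt.1 fun hx => h.not_ge ((hB j (by omega) x).1 hx))
  have above : j + 1 ≤ B x → C (b (j + 1)) ≤ C x := fun h =>
    hC.monotone ((hB _ (by omega) x).2 h).le
  omega

end Merge

noncomputable def countBelow (u : ℕ → ℕ) (x : ℕ) : ℕ :=
  {l | 1 ≤ l ∧ u l < x}.ncard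

theorem isCountBelow_countBelow {u : ℕ → ℕ} (hu : MonotoneOn u (Set.Ici 1))
    (hfin : ∀ x, {l | 1 ≤ l ∧ u l < x}.Finite) : IsCountBelow u (countBelow u) := by
  intro l hl x
  constructor
  · intro hlx
    have hsub : Set.Icc 1 l ⊆ {l | 1 ≤ l ∧ u l < x} :=
      fun m hm => ⟨hm.1, (hu hm.1 hl hm.2).trans_lt hlx⟩
    simpa [countBelow] using Set.ncard_le_ncard hsub (hfin x)
  · intro hlN
    by_contra! hxl
    have hsub : {l | 1 ≤ l ∧ u l < x} ⊆ Set.Icc 1 (l - 1) := by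
      refine fun m hm => ⟨hm.1, ?_⟩
      by_contra! hml
      exact (hxl.trans (hu hl hm.1 (by omega))).not_gt hm.2
    have := Set.ncard_le_ncard hsub (Set.finite_Icc _ _)
    rw [Set.ncard_Icc_nat] at this
    unfold countBelow at hlN
    omega

/-- Exponent vectors are finitely supported functions rather than functions on `s`, so that the
value `∏ p i ^ α i` does not depend on `s`. -/
def smoothExponents (p : ℕ → ℕ) (s : Finset ℕ) (P : ℕ → Prop) : Set (ℕ →₀ ℕ) :=
  {α | α.support ⊆ s ∧ P (α.prod fun i e => p i ^ e)}

theorem prod_add_single_one (p : ℕ → ℕ) (β : ℕ →₀ ℕ) (a : ℕ) :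
    ((β + Finsupp.single a 1).prod fun i e => p i ^ e) = p a * β.prod fun i e => p i ^ e := by
  rw [Finsupp.prod_add_index' (h := fun i e => p i ^ e) (fun _ => pow_zero _)
    (fun _ _ _ => pow_add _ _ _),
    Finsupp.prod_single_index (h := fun i e => p i ^ e) (pow_zero _), pow_one, mul_comm]

theorem smoothExponents_lt_finite {p : ℕ → ℕ} {s : Finset ℕ} (hp : ∀ i ∈ s, 1 < p i) (x : ℕ) :
    (smoothExponents p s (· < x)).Finite := by
  refine (s.finsupp fun _ => Finset.range x).finite_toSet.subset fun α ⟨hs, hx⟩ =>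
    Finset.mem_finsupp_iff.2 ⟨hs, fun i hi => Finset.mem_range.2 ?_⟩
  calc α i < 2 ^ α i := Nat.lt_two_pow_self
    _ ≤ p i ^ α i := Nat.pow_le_pow_left (hp i hi) _
    _ ≤ ∏ j ∈ s, p j ^ α j :=
      Finset.single_le_prod' (fun j hj => Nat.one_le_pow _ _ (Nat.zero_lt_of_lt (hp j hj))) hi
    _ = α.prod fun i e => p i ^ e :=
      (Finsupp.prod_of_support_subset α hs _ fun _ _ => pow_zero _).symm
    _ < x := hx

theorem ncard_smoothExponents_eq_add {p : ℕ → ℕ} {s : Finset ℕ} {a : ℕ} (ha : a ∈ s)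
    {P : ℕ → Prop} (hfin : (smoothExponents p s P).Finite) :
    (smoothExponents p s P).ncard =
      (smoothExponents p (s.erase a) P).ncard +
        (smoothExponents p s fun y => P (p a * y)).ncard := by
  have hzero : smoothExponents p s P ∩ {α | α a = 0} = smoothExponents p (s.erase a) P := by
    ext α
    simp only [smoothExponents, Set.mem_inter_iff, Set.mem_ofPred_eq, Finset.subset_erase,
      Finsupp.mem_support_iff, not_not]
    tauto
  have hpos : smoothExponents p s P \ {α | α a = 0} =
      (· + Finsupp.single a 1) '' smoothExponents p s fun y => P (p a * y) := by
    ext α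
    constructor
    · rintro ⟨⟨hs, hP⟩, ha0⟩
      have hα : α - Finsupp.single a 1 + Finsupp.single a 1 = α :=
        tsub_add_cancel_of_le (Finsupp.single_le_iff.2 (Nat.one_le_iff_ne_zero.2 ha0))
      refine ⟨α - Finsupp.single a 1, ⟨Finsupp.support_tsub.trans hs, ?_⟩, hα⟩
      dsimp only
      rwa [← prod_add_single_one, hα]
    · rintro ⟨β, ⟨hs, hP⟩, rfl⟩
      refine ⟨⟨Finsupp.support_add.trans (Finset.union_subset hs ?_), ?_⟩, ?_⟩
      · exact Finsupp.support_single_subset.trans (Finset.singleton_subset_iff.2 ha)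
      · rwa [prod_add_single_one]
      · simp
  rw [← Set.ncard_inter_add_ncard_sdiff_eq_ncard _ {α | α a = 0} hfin, hzero, hpos,
    Set.ncard_image_of_injective _ (add_left_injective _)]

namespace IsSmoothEnum

variable {p : ℕ → ℕ} {k : ℕ} {u : ℕ → ℕ}

theorem nonempty_equiv (hu : IsSmoothEnum p k u) (P : ℕ → Prop) :
    Nonempty ({l | 1 ≤ l ∧ P (u l)} ≃ smoothExponents p (Finset.Icc 3 k) P) := by
  obtain ⟨-, e, he⟩ := hu
  let f : {j : ℕ // 1 ≤ j} ≃ {α : ℕ →₀ ℕ // ↑α.support ⊆ (↑(Finset.Icc 3 k) : Set ℕ)} :=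
    (e.trans Finsupp.equivFunOnFinite.symm).trans (Finsupp.restrictSupportEquiv _ ℕ).symm
  have hf : ∀ j, u j.1 = (f j).1.prod fun i e => p i ^ e := by
    intro j
    rw [he, Finsupp.prod_of_support_subset _ (Finset.coe_subset.1 (f j).2) _
      fun _ _ => pow_zero _, ← Finset.prod_coe_sort (Finset.Icc 3 k) fun i => p i ^ (f j).1 i]
    refine Finset.prod_congr rfl fun i _ => congrArg _ ?_
    exact (DFunLike.congr_fun (Equiv.apply_symm_apply (Finsupp.restrictSupportEquiv _ ℕ)
      (Finsupp.equivFunOnFinite.symm (e j))) i).symm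
  exact ⟨(Equiv.subtypeSubtypeEquivSubtypeInter (1 ≤ ·) (fun l => P (u l))).symm.trans
    ((Equiv.subtypeEquiv f fun j => by rw [hf]).trans
      (Equiv.subtypeSubtypeEquivSubtypeInter _ _))⟩

theorem ncard_setOf_eq (hu : IsSmoothEnum p k u) (P : ℕ → Prop) :
    {l | 1 ≤ l ∧ P (u l)}.ncard = (smoothExponents p (Finset.Icc 3 k) P).ncard := by
  obtain ⟨e⟩ := hu.nonempty_equiv P
  rw [← Nat.card_coe_set_eq, Nat.card_congr e, Nat.card_coe_set_eq]

theorem apply_one (hu : IsSmoothEnum p k u) (hp : ∀ i ∈ Finset.Icc 3 k, 0 < p i) : u 1 = 1 := by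
  obtain ⟨hstep, e, he⟩ := hu
  have hzero : u (e.symm 0) = 1 := by simp [he]
  have hpos : 0 < u 1 := by
    rw [he ⟨1, le_rfl⟩]
    exact Finset.prod_pos fun i _ => pow_pos (hp i i.2) _
  have := monotoneOn_nat_Ici_of_le_succ hstep Set.self_mem_Ici (e.symm 0).2 (e.symm 0).2
  omega

theorem isCountBelow_const_mul (hu : IsSmoothEnum p k u) (hp : ∀ i ∈ Finset.Icc 3 k, 1 < p i)
    {q : ℕ} (hq : 0 < q) : IsCountBelow (fun l => q * u l) (countBelow fun l => q * u l) := by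
  refine isCountBelow_countBelow (fun a ha b hb hab =>
    Nat.mul_le_mul_left q (monotoneOn_nat_Ici_of_le_succ hu.1 ha hb hab)) fun x => ?_
  obtain ⟨e⟩ := hu.nonempty_equiv (· < x)
  have := (smoothExponents_lt_finite hp x).to_subtype
  exact (Set.finite_coe_iff.1 (Finite.of_equiv _ e.symm)).subset fun l ⟨hl, hlx⟩ =>
    ⟨hl, (Nat.le_mul_of_pos_left _ hq).trans_lt hlx⟩

theorem isCountBelow (hu : IsSmoothEnum p k u) (hp : ∀ i ∈ Finset.Icc 3 k, 1 < p i) :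
    IsCountBelow u (countBelow u) := by
  simpa using hu.isCountBelow_const_mul hp one_pos

theorem countBelow_eq_add {u' : ℕ → ℕ} (hu : IsSmoothEnum p k u)
    (hu' : IsSmoothEnum p (k - 1) u') (hk : 3 ≤ k) (hp : ∀ i ∈ Finset.Icc 3 k, 1 < p i) (x : ℕ) :
    countBelow u x = countBelow u' x + countBelow (fun l => p k * u l) x := by
  have hIcc : (Finset.Icc 3 k).erase k = Finset.Icc 3 (k - 1) := by
    ext i
    simp only [Finset.mem_erase, Finset.mem_Icc]
    omega
  rw [countBelow, countBelow, countBelow, hu.ncard_setOf_eq (· < x), hu'.ncard_setOf_eq (· < x),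
    hu.ncard_setOf_eq (p k * · < x), ← hIcc]
  exact ncard_smoothExponents_eq_add (Finset.mem_Icc.2 ⟨hk, le_rfl⟩)
    (smoothExponents_lt_finite hp x)

end IsSmoothEnum

/-- The multiset {u^k_l : 1 ≤ l ≤ n} decomposes as the disjoint union of
{u^{k−1}_l : 1 ≤ l ≤ j} and {p_k·u^k_l : 1 ≤ l ≤ n−j}, where j is the largest
index with k_j ≤ n. -/
theorem smooth_enum_multiset_decomposition
    (p : ℕ → ℕ) (k : ℕ) (hk : 4 ≤ k)
    (hp : ∀ i, 3 ≤ i → i ≤ k → 1 < p i)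
    (uk uk1 : ℕ → ℕ)
    (huk : IsSmoothEnum p k uk) (huk1 : IsSmoothEnum p (k - 1) uk1)
    (K : ℕ → ℕ) (hK1 : K 1 = 1)
    (hK : ∀ j, 2 ≤ j → K j = sInf {l | K (j - 1) < l ∧ uk l = uk1 j})
    (n j : ℕ) (hj : 1 ≤ j) (h1 : K j ≤ n) (h2 : n < K (j + 1)) :
    (Finset.Icc 1 n).val.map uk =
      (Finset.Icc 1 j).val.map uk1 +
      (Finset.Icc 1 (n - j)).val.map (fun l => p k * uk l) := by
  have hpk : 1 < p k := hp k (by omega) le_rfl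
  have hp' : ∀ i ∈ Finset.Icc 3 k, 1 < p i := fun i hi =>
    hp i (Finset.mem_Icc.1 hi).1 (Finset.mem_Icc.1 hi).2
  have hp'' : ∀ i ∈ Finset.Icc 3 (k - 1), 1 < p i := fun i hi =>
    hp' i (Finset.Icc_subset_Icc_right (Nat.sub_le k 1) hi)
  have hA := huk.isCountBelow hp'
  have hB := huk1.isCountBelow hp''
  have hC := huk.isCountBelow_const_mul hp' (Nat.zero_lt_of_lt hpk)
  have hABC := huk.countBelow_eq_add huk1 (by omega) hp'
  have hC1 : countBelow (fun l => p k * uk l) (uk1 1) = 0 := by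
    rw [huk1.apply_one fun i hi => Nat.zero_lt_of_lt (hp'' i hi)]
    by_contra hne
    have : p k * uk 1 < 1 := (hC 1 le_rfl 1).2 (Nat.one_le_iff_ne_zero.2 hne)
    rw [huk.apply_one fun i hi => Nat.zero_lt_of_lt (hp' i hi)] at this
    omega
  have hKm := hA.index_eq_add_count hB hC hABC hK1 hK hC1
  exact hA.map_Icc_eq_add hB hC hABC (hKm j hj ▸ h1) (hKm (j + 1) (by omega) ▸ h2)
end
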